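/- arXiv:1311.3896 — 9 statements merged into one kernel-verified Lean document; each statement's English description precedes it below -/
import Mathlib

section
/- Let G be Fréchet(α) distributed. For differentiable φ on (0,∞) with φ(x)e^{-x^{-α}} → 0 as x → ∞ and as x → 0+, and f differentiable with |f(0+)| < ∞ and lim_{x→∞}|f(x)| < ∞ (assuming absolute integrability of all terms), E[f(G)(φ'(G)G^{α+1} + α φ(G))] = -E[G^{α+1} f'(G) φ(G)]. -/
open Real MeasureTheory Filter Set

/-! The integrand on the left is `f · (α φ e)'` with `e(x) = exp (-x^{-α})` the Fréchet
distribution function, so this is integration by parts on `(0, ∞)`; the boundary terms vanish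
because `f` has finite limits at both ends while `φ e → 0` there. -/

lemma rpow_add_one_mul_rpow_neg_sub_one (α : ℝ) {x : ℝ} (hx : 0 < x) :
    x ^ (α + 1) * x ^ (-α - 1) = 1 := by
  rw [← rpow_add hx]
  norm_num

lemma hasDerivAt_exp_neg_rpow_neg (α : ℝ) {x : ℝ} (hx : 0 < x) :
    HasDerivAt (fun y : ℝ => exp (-(y ^ (-α)))) (α * x ^ (-α - 1) * exp (-(x ^ (-α)))) x := by
  have h := ((hasDerivAt_rpow_const (p := -α) (Or.inl hx.ne')).fun_neg).exp
  convert h using 1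
  ring

lemma hasDerivAt_mul_exp_neg_rpow_neg (α : ℝ) {φ : ℝ → ℝ} {x : ℝ} (hx : 0 < x)
    (hφ : DifferentiableAt ℝ φ x) :
    HasDerivAt (fun y => α * (φ y * exp (-(y ^ (-α)))))
      ((deriv φ x * x ^ (α + 1) + α * φ x) * (α * x ^ (-α - 1) * exp (-(x ^ (-α))))) x := by
  refine ((hφ.hasDerivAt.mul (hasDerivAt_exp_neg_rpow_neg α hx)).const_mul α).congr_deriv ?_
  linear_combination -α * deriv φ x * exp (-(x ^ (-α))) * rpow_add_one_mul_rpow_neg_sub_one α hx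

theorem frechet_integration_by_parts_general (α : ℝ)
    (φ f : ℝ → ℝ)
    (hφdiff : ∀ x ∈ Set.Ioi (0 : ℝ), DifferentiableAt ℝ φ x)
    (hfdiff : ∀ x ∈ Set.Ioi (0 : ℝ), DifferentiableAt ℝ f x)
    (hlim_top : Tendsto (fun x => φ x * Real.exp (-(x ^ (-α)))) atTop (nhds 0))
    (hlim_zero : Tendsto (fun x => φ x * Real.exp (-(x ^ (-α))))
      (nhdsWithin 0 (Set.Ioi 0)) (nhds 0))
    (Lf0 : ℝ) (hf0 : Tendsto f (nhdsWithin 0 (Set.Ioi 0)) (nhds Lf0))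
    (Lftop : ℝ) (hftop : Tendsto f atTop (nhds Lftop))
    (hint1 : IntegrableOn
      (fun x => f x * (deriv φ x * x ^ (α + 1) + α * φ x) *
        (α * x ^ (-α - 1) * Real.exp (-(x ^ (-α))))) (Set.Ioi 0))
    (hint2 : IntegrableOn
      (fun x => x ^ (α + 1) * deriv f x * φ x *
        (α * x ^ (-α - 1) * Real.exp (-(x ^ (-α))))) (Set.Ioi 0)) :
    ∫ x in Set.Ioi (0 : ℝ),
        f x * (deriv φ x * x ^ (α + 1) + α * φ x) *
          (α * x ^ (-α - 1) * Real.exp (-(x ^ (-α)))) =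
      -∫ x in Set.Ioi (0 : ℝ),
        x ^ (α + 1) * deriv f x * φ x *
          (α * x ^ (-α - 1) * Real.exp (-(x ^ (-α)))) := by
  have hrhs_integrand : EqOn (fun x => x ^ (α + 1) * deriv f x * φ x *
      (α * x ^ (-α - 1) * exp (-(x ^ (-α)))))
      (fun x => deriv f x * (α * (φ x * exp (-(x ^ (-α)))))) (Ioi 0) := by
    intro x (hx : 0 < x)
    linear_combination
      α * deriv f x * φ x * exp (-(x ^ (-α))) * rpow_add_one_mul_rpow_neg_sub_one α hx
  have hparts := integral_Ioi_mul_deriv_eq_deriv_mul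
    (fun x hx => (hfdiff x hx).hasDerivAt)
    (fun x hx => hasDerivAt_mul_exp_neg_rpow_neg α hx (hφdiff x hx))
    (hint1.congr_fun (fun x _ => mul_assoc _ _ _) measurableSet_Ioi)
    (hint2.congr_fun hrhs_integrand measurableSet_Ioi)
    (hf0.mul (hlim_zero.const_mul α)) (hftop.mul (hlim_top.const_mul α))
  simp only [mul_zero, sub_zero, zero_sub] at hparts
  rw [setIntegral_congr_fun measurableSet_Ioi hrhs_integrand]
  simpa only [mul_assoc] using hparts

theorem frechet_integration_by_parts (α : ℝ) (hα : 0 < α)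
    (φ f : ℝ → ℝ)
    (hφdiff : ∀ x ∈ Set.Ioi (0 : ℝ), DifferentiableAt ℝ φ x)
    (hfdiff : ∀ x ∈ Set.Ioi (0 : ℝ), DifferentiableAt ℝ f x)
    (hlim_top : Tendsto (fun x => φ x * Real.exp (-(x ^ (-α)))) atTop (nhds 0))
    (hlim_zero : Tendsto (fun x => φ x * Real.exp (-(x ^ (-α))))
      (nhdsWithin 0 (Set.Ioi 0)) (nhds 0))
    (Lf0 : ℝ) (hf0 : Tendsto f (nhdsWithin 0 (Set.Ioi 0)) (nhds Lf0))
    (Lftop : ℝ) (hftop : Tendsto f atTop (nhds Lftop))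
    (hint1 : IntegrableOn
      (fun x => f x * (deriv φ x * x ^ (α + 1) + α * φ x) *
        (α * x ^ (-α - 1) * Real.exp (-(x ^ (-α))))) (Set.Ioi 0))
    (hint2 : IntegrableOn
      (fun x => x ^ (α + 1) * deriv f x * φ x *
        (α * x ^ (-α - 1) * Real.exp (-(x ^ (-α))))) (Set.Ioi 0)) :
    ∫ x in Set.Ioi (0 : ℝ),
        f x * (deriv φ x * x ^ (α + 1) + α * φ x) *
          (α * x ^ (-α - 1) * Real.exp (-(x ^ (-α)))) =
      -∫ x in Set.Ioi (0 : ℝ),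
        x ^ (α + 1) * deriv f x * φ x *
          (α * x ^ (-α - 1) * Real.exp (-(x ^ (-α)))) :=
  frechet_integration_by_parts_general α φ f hφdiff hfdiff hlim_top hlim_zero Lf0 hf0 Lftop hftop
    hint1 hint2
end

section
/- Let h be continuous with E|h(G)| < ∞ and φ_h the solution of the Fréchet Stein equation given by φ_h(x) = e^{x^{-α}} ∫_0^x (h(y) - Eh(G)) y^{-α-1} e^{-y^{-α}} dy. Then lim_{x→0+} φ_h(x) = (h(0+) - E h(G))/α, provided h has a limit at 0+. -/
open Real MeasureTheory Filter Set
open scoped Topology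

/-!
The Fréchet distribution function `F(x) = exp (-x ^ (-α))` tends to `0` at `0+` and has derivative
the density `p`, so `∫₀ˣ p = F x`. Hence
`φ_h(x) = (1 / α) * (∫₀ˣ (h - E h(G)) p) / (∫₀ˣ p)`
is `1 / α` times an average of `h - E h(G)` over `(0, x)`, which tends to `h(0+) - E h(G)`.
-/

theorem integrableOn_Ioo_deriv_of_nonneg_of_tendsto {g g' : ℝ → ℝ} {a b l : ℝ}
    (hderiv : ∀ x ∈ Ioc a b, HasDerivAt g (g' x) x) (hpos : ∀ x ∈ Ioo a b, 0 ≤ g' x)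
    (ha : Tendsto g (𝓝[>] a) (𝓝 l)) : IntegrableOn g' (Ioo a b) := by
  classical
  rw [← integrableOn_Ioc_iff_integrableOn_Ioo]
  refine intervalIntegral.integrableOn_deriv_of_nonneg (g := Function.update g a l) ?_
    (fun x hx => ?_) hpos
  · rw [continuousOn_update_iff, Icc_sdiff_left]
    exact ⟨fun x hx => (hderiv x hx).continuousAt.continuousWithinAt,
      fun _ => ha.mono_left (nhdsWithin_mono _ Ioc_subset_Ioi_self)⟩
  · refine (hderiv x (Ioo_subset_Ioc_self hx)).congr_of_eventuallyEq ?_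
    filter_upwards [lt_mem_nhds hx.1] with y hy
    exact Function.update_of_ne hy.ne' _ _

theorem integral_Ioo_eq_sub_of_hasDerivAt_of_nonneg {g g' : ℝ → ℝ} {a b l : ℝ} (hab : a < b)
    (hderiv : ∀ x ∈ Ioc a b, HasDerivAt g (g' x) x) (hpos : ∀ x ∈ Ioo a b, 0 ≤ g' x)
    (ha : Tendsto g (𝓝[>] a) (𝓝 l)) : ∫ x in Ioo a b, g' x = g b - l := by
  rw [← integral_Ioc_eq_integral_Ioo, ← intervalIntegral.integral_of_le hab.le]
  refine intervalIntegral.integral_eq_sub_of_hasDerivAt_of_tendsto hab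
    (fun x hx => hderiv x (Ioo_subset_Ioc_self hx)) ?_ ha
    (hderiv b (right_mem_Ioc.2 hab)).continuousAt.continuousWithinAt
  rw [intervalIntegrable_iff_integrableOn_Ioo_of_le hab.le]
  exact integrableOn_Ioo_deriv_of_nonneg_of_tendsto hderiv hpos ha

theorem tendsto_setIntegral_mul_div_setIntegral {f p : ℝ → ℝ} {a L : ℝ}
    (hf : Tendsto f (𝓝[>] a) (𝓝 L)) (hp : ∀ y ∈ Ioi a, 0 ≤ p y)
    (hp_int : ∀ x ∈ Ioi a, IntegrableOn p (Ioo a x))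
    (hfp_int : ∀ x ∈ Ioi a, IntegrableOn (fun y => f y * p y) (Ioo a x))
    (hp_pos : ∀ x ∈ Ioi a, 0 < ∫ y in Ioo a x, p y) :
    Tendsto (fun x => (∫ y in Ioo a x, f y * p y) / ∫ y in Ioo a x, p y) (𝓝[>] a) (𝓝 L) := by
  rw [Metric.tendsto_nhds]
  intro ε hε
  obtain ⟨c, hac, hclose⟩ := mem_nhdsGT_iff_exists_Ioo_subset.1
    (hf (Metric.closedBall_mem_nhds L (half_pos hε)))
  filter_upwards [Ioo_mem_nhdsGT hac] with x hx
  have hP := hp_pos x hx.1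
  have hdiff : (∫ y in Ioo a x, f y * p y) / (∫ y in Ioo a x, p y) - L
      = (∫ y in Ioo a x, (f y - L) * p y) / ∫ y in Ioo a x, p y := by
    simp_rw [sub_mul]
    rw [integral_sub (hfp_int x hx.1) ((hp_int x hx.1).const_mul L), integral_const_mul]
    field_simp
  have hbound : ‖∫ y in Ioo a x, (f y - L) * p y‖ ≤ ε / 2 * ∫ y in Ioo a x, p y := by
    rw [← integral_const_mul]
    refine norm_integral_le_of_norm_le ((hp_int x hx.1).const_mul _) ?_
    rw [ae_restrict_iff' measurableSet_Ioo]
    filter_upwards with y hy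
    have hpy := hp y hy.1
    rw [norm_mul, Real.norm_of_nonneg hpy]
    exact mul_le_mul_of_nonneg_right
      (hclose ⟨hy.1, hy.2.trans hx.2⟩ : dist (f y) L ≤ ε / 2) hpy
  rw [dist_eq_norm, hdiff, norm_div, Real.norm_of_nonneg hP.le, div_lt_iff₀ hP]
  linarith [mul_lt_mul_of_pos_right (half_lt_self hε) hP]

noncomputable def frechetCDF (α y : ℝ) : ℝ := exp (-(y ^ (-α)))

noncomputable def frechetPDF (α y : ℝ) : ℝ := α * y ^ (-α - 1) * exp (-(y ^ (-α)))

section Frechet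

variable {α : ℝ}

theorem frechetPDF_nonneg (hα : 0 ≤ α) {y : ℝ} (hy : 0 ≤ y) : 0 ≤ frechetPDF α y := by
  unfold frechetPDF
  positivity

theorem continuousOn_frechetPDF : ContinuousOn (frechetPDF α) (Ioi 0) := fun y hy =>
  have hrpow (p : ℝ) := Real.continuousAt_rpow_const y p (Or.inl (ne_of_gt hy))
  ((continuousAt_const.mul (hrpow _)).mul (hrpow _).neg.rexp).continuousWithinAt

theorem hasDerivAt_frechetCDF {y : ℝ} (hy : 0 < y) :
    HasDerivAt (frechetCDF α) (frechetPDF α y) y := by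
  have := (Real.hasDerivAt_rpow_const (p := -α) (Or.inl hy.ne')).fun_neg.exp
  exact this.congr_deriv (by rw [frechetPDF]; ring)

theorem tendsto_frechetCDF_zero (hα : 0 < α) : Tendsto (frechetCDF α) (𝓝[>] 0) (𝓝 0) :=
  Real.tendsto_exp_neg_atTop_nhds_zero.comp (tendsto_rpow_neg_nhdsGT_zero (neg_lt_zero.2 hα))

theorem integrableOn_frechetPDF (hα : 0 < α) (x : ℝ) : IntegrableOn (frechetPDF α) (Ioo 0 x) :=
  integrableOn_Ioo_deriv_of_nonneg_of_tendsto (fun _ hy => hasDerivAt_frechetCDF hy.1)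
    (fun _ hy => frechetPDF_nonneg hα.le hy.1.le) (tendsto_frechetCDF_zero hα)

theorem integral_frechetPDF (hα : 0 < α) {x : ℝ} (hx : 0 < x) :
    ∫ y in Ioo 0 x, frechetPDF α y = frechetCDF α x := by
  rw [integral_Ioo_eq_sub_of_hasDerivAt_of_nonneg hx (fun _ hy => hasDerivAt_frechetCDF hy.1)
    (fun _ hy => frechetPDF_nonneg hα.le hy.1.le) (tendsto_frechetCDF_zero hα), sub_zero]

end Frechet

theorem frechet_stein_solution_limit_at_zero_general (α : ℝ) (hα : 0 < α)
    (h : ℝ → ℝ) (hcont : ContinuousOn h (Set.Ioi 0))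
    (hint : IntegrableOn
      (fun y => |h y| * (α * y ^ (-α - 1) * Real.exp (-(y ^ (-α))))) (Set.Ioi 0))
    (μh : ℝ)
    (h0 : ℝ) (hh0 : Tendsto h (nhdsWithin 0 (Set.Ioi 0)) (nhds h0))
    (φh : ℝ → ℝ)
    (hφh : ∀ x : ℝ, 0 < x → φh x =
      Real.exp (x ^ (-α)) *
        ∫ y in Set.Ioo (0 : ℝ) x, (h y - μh) * y ^ (-α - 1) * Real.exp (-(y ^ (-α)))) :
    Tendsto φh (nhdsWithin 0 (Set.Ioi 0)) (nhds ((h0 - μh) / α)) := by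
  have hpdf_int := integrableOn_frechetPDF hα
  have hhpdf_int : IntegrableOn (fun y => h y * frechetPDF α y) (Ioi 0) := by
    refine hint.mono'
      ((hcont.mul continuousOn_frechetPDF).aestronglyMeasurable measurableSet_Ioi) ?_
    rw [ae_restrict_iff' measurableSet_Ioi]
    filter_upwards with y hy
    rw [norm_mul, Real.norm_eq_abs, Real.norm_of_nonneg (frechetPDF_nonneg hα.le (le_of_lt hy))]
    exact le_rfl
  have hφ : ∀ x ∈ Ioi (0 : ℝ), φh x =
      ((∫ y in Ioo 0 x, (h y - μh) * frechetPDF α y) / ∫ y in Ioo 0 x, frechetPDF α y) / α := by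
    intro x hx
    have hintegrand : ∀ y, (h y - μh) * frechetPDF α y
        = α * ((h y - μh) * y ^ (-α - 1) * exp (-(y ^ (-α)))) := fun y => by
      simp only [frechetPDF]; ring
    simp_rw [hintegrand]
    rw [integral_const_mul, integral_frechetPDF hα hx, hφh x hx, frechetCDF, exp_neg]
    field_simp
  have hratio := tendsto_setIntegral_mul_div_setIntegral (hh0.sub_const μh)
    (fun y hy => frechetPDF_nonneg hα.le (le_of_lt hy)) (fun x _ => hpdf_int x)
    (fun x _ => ((hhpdf_int.mono_set Ioo_subset_Ioi_self).sub ((hpdf_int x).const_mul μh)).congr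
      (Eventually.of_forall fun y => (sub_mul _ _ _).symm))
    (fun x hx => by rw [integral_frechetPDF hα hx]; exact exp_pos _)
  exact (hratio.div_const α).congr' (eventually_nhdsWithin_of_forall fun x hx => (hφ x hx).symm)

theorem frechet_stein_solution_limit_at_zero (α : ℝ) (hα : 0 < α)
    (h : ℝ → ℝ) (hcont : ContinuousOn h (Set.Ioi 0))
    (hint : IntegrableOn
      (fun y => |h y| * (α * y ^ (-α - 1) * Real.exp (-(y ^ (-α))))) (Set.Ioi 0))
    (μh : ℝ)
    (hμh : μh = ∫ y in Set.Ioi (0 : ℝ), h y * (α * y ^ (-α - 1) * Real.exp (-(y ^ (-α)))))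
    (h0 : ℝ) (hh0 : Tendsto h (nhdsWithin 0 (Set.Ioi 0)) (nhds h0))
    (φh : ℝ → ℝ)
    (hφh : ∀ x : ℝ, 0 < x → φh x =
      Real.exp (x ^ (-α)) *
        ∫ y in Set.Ioo (0 : ℝ) x, (h y - μh) * y ^ (-α - 1) * Real.exp (-(y ^ (-α)))) :
    Tendsto φh (nhdsWithin 0 (Set.Ioi 0)) (nhds ((h0 - μh) / α)) :=
  frechet_stein_solution_limit_at_zero_general α hα h hcont hint μh h0 hh0 φh hφh
end

section
/- Let h with E|h(G)| < ∞ and φ_h(x) = e^{x^{-α}} ∫_x^∞ (Eh(G) - h(y)) y^{-α-1} e^{-y^{-α}} dy. Then lim_{x→∞} φ_h(x) = 0. -/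
open Real MeasureTheory Filter Set

/-! The factor `exp (x ^ (-α))` tends to `1`, and the integral is the tail of a function that is
integrable on `(1, ∞)`: the constant part is dominated by `y ^ (-α - 1)`, and the part with `h` is
`h` against the Fréchet density, integrable by assumption. Tails of an integrable function tend
to `0`. -/

lemma tendsto_setIntegral_Ioi_atTop_nhds_zero {f : ℝ → ℝ} {a : ℝ} (hf : IntegrableOn f (Ioi a)) :
    Tendsto (fun x => ∫ y in Ioi x, f y) atTop (nhds 0) := by
  have hempty : ⋂ x : ℝ, Ioi x = ∅ :=
    eq_empty_of_forall_notMem fun y hy => lt_irrefl y (mem_iInter.mp hy y)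
  simpa [hempty] using
    tendsto_setIntegral_of_antitone (fun _ => measurableSet_Ioi) antitone_Ioi ⟨a, hf⟩

lemma Integrable.mul_of_integrable_abs_mul {X : Type*} [MeasurableSpace X] {μ : Measure X}
    {f w : X → ℝ} (hf : AEStronglyMeasurable f μ) (hw : AEStronglyMeasurable w μ)
    (hw_nonneg : ∀ᵐ x ∂μ, 0 ≤ w x) (hint : Integrable (fun x => |f x| * w x) μ) :
    Integrable (fun x => f x * w x) μ :=
  hint.mono' (hf.mul hw) <| hw_nonneg.mono fun x hx => by
    rw [norm_mul, Real.norm_eq_abs, Real.norm_of_nonneg hx]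

section Frechet

variable {α : ℝ}

lemma integrableOn_Ioi_rpow_mul_exp_neg_rpow (hα : 0 < α) {a : ℝ} (ha : 0 < a) :
    IntegrableOn (fun y : ℝ => y ^ (-α - 1) * exp (-(y ^ (-α)))) (Ioi a) := by
  refine (integrableOn_Ioi_rpow_of_lt (a := -α - 1) (by linarith) ha).mono' (by fun_prop) ?_
  refine (ae_restrict_iff' measurableSet_Ioi).mpr (Eventually.of_forall fun y (hy : a < y) => ?_)
  have hpow : 0 ≤ y ^ (-α - 1) := rpow_nonneg (ha.trans hy).le _
  have hexp : exp (-(y ^ (-α))) ≤ 1 :=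
    exp_le_one_iff.mpr (neg_nonpos.mpr (rpow_nonneg (ha.trans hy).le _))
  rw [norm_mul, Real.norm_of_nonneg hpow, Real.norm_of_nonneg (exp_pos _).le]
  exact mul_le_of_le_one_right hpow hexp

lemma integrableOn_Ioi_const_sub_mul_rpow_mul_exp_neg_rpow (hα : 0 < α) {h : ℝ → ℝ}
    (hmeas : Measurable h)
    (hint : IntegrableOn (fun y => |h y| * (α * y ^ (-α - 1) * exp (-(y ^ (-α))))) (Ioi 0))
    (c : ℝ) {a : ℝ} (ha : 0 < a) :
    IntegrableOn (fun y => (c - h y) * y ^ (-α - 1) * exp (-(y ^ (-α)))) (Ioi a) := by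
  have hweighted : IntegrableOn (fun y => h y * (α * y ^ (-α - 1) * exp (-(y ^ (-α))))) (Ioi 0) :=
    Integrable.mul_of_integrable_abs_mul hmeas.aestronglyMeasurable (by fun_prop)
      ((ae_restrict_iff' measurableSet_Ioi).mpr (Eventually.of_forall fun y (hy : 0 < y) => by
        have := rpow_nonneg hy.le (-α - 1)
        positivity)) hint
  have hsplit : (fun y => (c - h y) * y ^ (-α - 1) * exp (-(y ^ (-α)))) =
      fun y => c * (y ^ (-α - 1) * exp (-(y ^ (-α)))) -
        α⁻¹ * (h y * (α * y ^ (-α - 1) * exp (-(y ^ (-α))))) := by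
    ext y
    field_simp
  rw [hsplit]
  exact ((integrableOn_Ioi_rpow_mul_exp_neg_rpow hα ha).const_mul c).sub
    ((hweighted.mono_set (Ioi_subset_Ioi ha.le)).const_mul α⁻¹)

end Frechet

theorem frechet_stein_solution_limit_at_infty_general (α : ℝ) (hα : 0 < α)
    (h : ℝ → ℝ) (hmeas : Measurable h)
    (hint : IntegrableOn
      (fun y => |h y| * (α * y ^ (-α - 1) * Real.exp (-(y ^ (-α))))) (Set.Ioi 0))
    (μh : ℝ)
    (φh : ℝ → ℝ)
    (hφh : ∀ x : ℝ, 0 < x → φh x =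
      Real.exp (x ^ (-α)) *
        ∫ y in Set.Ioi x, (μh - h y) * y ^ (-α - 1) * Real.exp (-(y ^ (-α)))) :
    Tendsto φh atTop (nhds 0) := by
  have htail := tendsto_setIntegral_Ioi_atTop_nhds_zero
    (integrableOn_Ioi_const_sub_mul_rpow_mul_exp_neg_rpow hα hmeas hint μh one_pos)
  have hexp : Tendsto (fun x : ℝ => exp (x ^ (-α))) atTop (nhds 1) := by
    simpa [Function.comp_def] using (continuous_exp.tendsto 0).comp (tendsto_rpow_neg_atTop hα)
  simpa using (hexp.mul htail).congr' <|
    (eventually_gt_atTop 0).mono fun x hx => (hφh x hx).symm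

theorem frechet_stein_solution_limit_at_infty (α : ℝ) (hα : 0 < α)
    (h : ℝ → ℝ) (hmeas : Measurable h)
    (hint : IntegrableOn
      (fun y => |h y| * (α * y ^ (-α - 1) * Real.exp (-(y ^ (-α))))) (Set.Ioi 0))
    (μh : ℝ)
    (hμh : μh = ∫ y in Set.Ioi (0 : ℝ), h y * (α * y ^ (-α - 1) * Real.exp (-(y ^ (-α)))))
    (φh : ℝ → ℝ)
    (hφh : ∀ x : ℝ, 0 < x → φh x =
      Real.exp (x ^ (-α)) *
        ∫ y in Set.Ioi x, (μh - h y) * y ^ (-α - 1) * Real.exp (-(y ^ (-α)))) :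
    Tendsto φh atTop (nhds 0) :=
  frechet_stein_solution_limit_at_infty_general α hα h hmeas hint μh φh hφh
end

section
/- For every t > 0 and every x > 0, the solution φ_h of the Fréchet Stein equation with h = 1{· ≤ t} satisfies |φ_h(x)| ≤ (1 - e^{-t^{-α}})/α ≤ 1/α. In particular ‖φ_h‖_∞ ≤ 1/α. -/
open Real

lemma one_sub_exp_neg_nonneg {a : ℝ} (ha : 0 ≤ a) : 0 ≤ 1 - exp (-a) :=
  sub_nonneg.2 (exp_le_one_iff.2 (neg_nonpos.2 ha))

lemma abs_exp_neg_mul_exp_sub_one_le {a b : ℝ} (hb : 0 ≤ b) (hba : b ≤ a) :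
    |exp (-a) * (exp b - 1)| ≤ 1 - exp (-a) := by
  have hsplit : exp (-a) * (exp b - 1) = exp (b - a) - exp (-a) := by
    rw [mul_sub, mul_one, ← exp_add, neg_add_eq_sub]
  rw [hsplit, abs_of_nonneg (sub_nonneg.2 (exp_le_exp.2 (by linarith)))]
  gcongr
  exact exp_le_one_iff.2 (sub_nonpos.2 hba)

lemma abs_frechet_stein_indicator_rhs_le {α t : ℝ} (hα : 0 ≤ α) (ht : 0 < t) (x : ℝ) :
    |if x ≤ t then 1 - exp (-(t ^ (-α))) else exp (-(t ^ (-α))) * (exp (x ^ (-α)) - 1)|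
      ≤ 1 - exp (-(t ^ (-α))) := by
  split_ifs with hxt
  · exact (abs_of_nonneg (one_sub_exp_neg_nonneg (rpow_nonneg ht.le _))).le
  · have htx : t ≤ x := (not_le.1 hxt).le
    exact abs_exp_neg_mul_exp_sub_one_le (rpow_nonneg (ht.le.trans htx) _)
      (rpow_le_rpow_of_nonpos ht htx (neg_nonpos.2 hα))

theorem frechet_stein_solution_indicator_bound (α : ℝ) (hα : 0 < α) (t : ℝ) (ht : 0 < t)
    (φh : ℝ → ℝ)
    (hφh : ∀ x : ℝ, 0 < x →
      α * φh x =
        if x ≤ t then 1 - Real.exp (-(t ^ (-α)))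
        else Real.exp (-(t ^ (-α))) * (Real.exp (x ^ (-α)) - 1)) :
    ∀ x : ℝ, 0 < x →
      |φh x| ≤ (1 - Real.exp (-(t ^ (-α)))) / α ∧
      (1 - Real.exp (-(t ^ (-α)))) / α ≤ 1 / α := by
  intro x hx
  have hbound := abs_frechet_stein_indicator_rhs_le hα.le ht x
  rw [← hφh x hx, abs_mul, abs_of_pos hα] at hbound
  refine ⟨(le_div_iff₀' hα).2 hbound, ?_⟩
  gcongr
  exact sub_le_self _ (exp_pos _).le
end

section
/- Let W_n have density f_n(x) = α x^{-α-1}(1 - x^{-α}/n)^{n-1} on (n^{-1/α}, ∞). Then E[ |1 - ((n-1)/n)(1 - W_n^{-α}/n)^{-1}| ] = (2/(n-1))(1 - 1/n)^n. -/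
open Real MeasureTheory Set Filter Topology

/-!
With `u = x ^ (-α)`, the integrand is `|F'(x)|` for the primitive
`F(x) = (1 - u / n) ^ (n - 1) * u / n`, whose derivative is a positive multiple of `u - 1`.
So `F` increases on `(n ^ (-1/α), 1]` from `F(n ^ (-1/α)) = 0` and decreases on `(1, ∞)` to `0`,
and the integral of `|F'|` is `2 F(1) = 2 (1 - 1/n) ^ (n - 1) / n`.
-/

theorem integral_Ioi_abs_of_hasDerivAt {F f : ℝ → ℝ} {a b m : ℝ} (hab : a ≤ b)
    (hderiv : ∀ x ∈ Ici a, HasDerivAt F (f x) x)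
    (hpos : ∀ x ∈ Ioc a b, 0 ≤ f x) (hneg : ∀ x ∈ Ioi b, f x ≤ 0)
    (hlim : Tendsto F atTop (𝓝 m)) :
    ∫ x in Ioi a, |f x| = 2 * F b - F a - m := by
  have hcont : ContinuousOn F (Icc a b) := fun x hx =>
    (hderiv x hx.1).continuousAt.continuousWithinAt
  have hderivIoo : ∀ x ∈ Ioo a b, HasDerivAt F (f x) x := fun x hx => hderiv x hx.1.le
  have hderivIci : ∀ x ∈ Ici b, HasDerivAt F (f x) x := fun x hx => hderiv x (hab.trans hx)
  have hintIoc : IntegrableOn f (Ioc a b) :=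
    intervalIntegral.integrableOn_deriv_of_nonneg hcont hderivIoo
      fun x hx => hpos x (Ioo_subset_Ioc_self hx)
  have hintIoi : IntegrableOn f (Ioi b) := integrableOn_Ioi_deriv_of_nonpos' hderivIci hneg hlim
  have hIoc : ∫ x in Ioc a b, |f x| = F b - F a := by
    rw [setIntegral_congr_fun measurableSet_Ioc fun x hx => abs_of_nonneg (hpos x hx),
      ← intervalIntegral.integral_of_le hab,
      intervalIntegral.integral_eq_sub_of_hasDerivAt_of_le hab hcont hderivIoo
        ((intervalIntegrable_iff_integrableOn_Ioc_of_le hab).2 hintIoc)]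
  have hIoi : ∫ x in Ioi b, |f x| = F b - m := by
    rw [setIntegral_congr_fun measurableSet_Ioi fun x hx => abs_of_nonpos (hneg x hx),
      integral_neg, integral_Ioi_of_hasDerivAt_of_nonpos' hderivIci hneg hlim, neg_sub]
  rw [← Ioc_union_Ioi_eq_Ioi hab, setIntegral_union (Ioc_disjoint_Ioi le_rfl) measurableSet_Ioi
    hintIoc.abs hintIoi.abs, hIoc, hIoi]
  ring

theorem rpow_neg_inv_rpow_neg {c : ℝ} (hc : 0 ≤ c) {α : ℝ} (hα : α ≠ 0) :
    (c ^ (-(1 / α))) ^ (-α) = c := by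
  rw [show -(1 / α) = (-α)⁻¹ by ring, rpow_inv_rpow hc (neg_ne_zero.2 hα)]

theorem one_sub_rpow_neg_div_pos {α : ℝ} (hα : 0 < α) {n : ℕ} (hn : 1 ≤ n) {x : ℝ}
    (hx : (n : ℝ) ^ (-(1 / α)) < x) : 0 < 1 - x ^ (-α) / n := by
  have hn0 : (0 : ℝ) < n := by positivity
  have hlt : x ^ (-α) < n := by
    simpa only [rpow_neg_inv_rpow_neg hn0.le hα.ne'] using
      rpow_lt_rpow_of_neg (rpow_pos_of_pos hn0 _) hx (neg_lt_zero.2 hα)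
  rwa [sub_pos, div_lt_one hn0]

noncomputable def paretoMaxPrimitive (α : ℝ) (n : ℕ) (x : ℝ) : ℝ :=
  (1 - x ^ (-α) / n) ^ (n - 1) * x ^ (-α) / n

section
variable {α : ℝ} {n : ℕ}

theorem hasDerivAt_paretoMaxPrimitive (hn : 2 ≤ n) {x : ℝ} (hx : x ≠ 0) :
    HasDerivAt (paretoMaxPrimitive α n)
      (α / n * x ^ (-α - 1) * (1 - x ^ (-α) / n) ^ (n - 2) * (x ^ (-α) - 1)) x := by
  have hu : HasDerivAt (fun y : ℝ => y ^ (-α)) (-α * x ^ (-α - 1)) x := by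
    simpa using hasDerivAt_rpow_const (p := -α) (Or.inl hx)
  have hw : HasDerivAt (fun y : ℝ => 1 - y ^ (-α) / n) (α * x ^ (-α - 1) / n) x :=
    ((hu.div_const (n : ℝ)).const_sub 1).congr_deriv (by ring)
  refine (((hw.pow (n - 1)).mul hu).div_const (n : ℝ)).congr_deriv ?_
  rw [show n - 1 - 1 = n - 2 by omega, show n - 1 = n - 2 + 1 by omega, pow_succ]
  simp only [Pi.pow_apply, Pi.mul_apply]
  push_cast [Nat.cast_sub (by omega : 2 ≤ n)]
  field_simp
  ring

theorem abs_one_sub_mul_paretoMaxDensity (hα : 0 ≤ α) (hn : 2 ≤ n) {x : ℝ} (hx : 0 ≤ x)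
    (hw : 0 < 1 - x ^ (-α) / n) :
    |1 - ((n : ℝ) - 1) / n * (1 - x ^ (-α) / n)⁻¹| *
        (α * x ^ (-α - 1) * (1 - x ^ (-α) / n) ^ (n - 1)) =
      |α / n * x ^ (-α - 1) * (1 - x ^ (-α) / n) ^ (n - 2) * (x ^ (-α) - 1)| := by
  have hn0 : (0 : ℝ) < n := by positivity
  have hv := rpow_nonneg hx (-α - 1)
  generalize x ^ (-α) = u at hw ⊢
  generalize x ^ (-α - 1) = v at hv ⊢
  have hnu : (n : ℝ) - u ≠ 0 := by
    rw [sub_pos, div_lt_one hn0] at hw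
    exact (sub_pos.2 hw).ne'
  have h : 1 - ((n : ℝ) - 1) / n * (1 - u / n)⁻¹ = (1 - u) / (n * (1 - u / n)) := by
    field_simp
    ring
  rw [h, abs_div, abs_of_pos (mul_pos hn0 hw), abs_mul _ (u - 1),
    abs_of_nonneg (mul_nonneg (mul_nonneg (div_nonneg hα hn0.le) hv) (pow_nonneg hw.le _)),
    abs_sub_comm, show n - 1 = n - 2 + 1 by omega, pow_succ]
  field_simp

theorem tendsto_paretoMaxPrimitive_atTop (hα : 0 < α) :
    Tendsto (paretoMaxPrimitive α n) atTop (𝓝 0) := by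
  have hu := tendsto_rpow_neg_atTop hα
  rw [show (0 : ℝ) = (1 - 0 / n) ^ (n - 1) * 0 / n by simp]
  exact ((((hu.div_const (n : ℝ)).const_sub 1).pow (n - 1)).mul hu).div_const (n : ℝ)

theorem paretoMaxPrimitive_one : paretoMaxPrimitive α n 1 = (1 - 1 / n) ^ (n - 1) / n := by
  simp [paretoMaxPrimitive]

theorem paretoMaxPrimitive_of_rpow_neg_eq (hn : 2 ≤ n) {x : ℝ} (hx : x ^ (-α) = n) :
    paretoMaxPrimitive α n x = 0 := by
  have hn0 : (n : ℝ) ≠ 0 := by positivity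
  simp [paretoMaxPrimitive, hx, hn0, show n - 1 ≠ 0 by omega]

end

theorem pareto_max_expectation (α : ℝ) (hα : 0 < α) (n : ℕ) (hn : 2 ≤ n)
    (fn : ℝ → ℝ)
    (hfn : ∀ x : ℝ, fn x =
      if (n : ℝ) ^ (-(1 / α)) < x then α * x ^ (-α - 1) * (1 - x ^ (-α) / n) ^ (n - 1)
      else 0) :
    ∫ x in Set.Ioi ((n : ℝ) ^ (-(1 / α))),
        |1 - ((n : ℝ) - 1) / n * (1 - x ^ (-α) / n)⁻¹| * fn x =
      2 / ((n : ℝ) - 1) * (1 - 1 / n) ^ n := by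
  have hn1 : (1 : ℝ) < n := by exact_mod_cast hn
  set a := (n : ℝ) ^ (-(1 / α))
  have ha_pos : 0 < a := rpow_pos_of_pos (by positivity) _
  have ha_le : a ≤ 1 := rpow_le_one_of_one_le_of_nonpos hn1.le (by simp [hα.le])
  have hw (x : ℝ) (hx : a < x) : 0 < 1 - x ^ (-α) / n :=
    one_sub_rpow_neg_div_pos hα (by omega) hx
  have hfactor (x : ℝ) (hx : a < x) :
      0 ≤ α / n * x ^ (-α - 1) * (1 - x ^ (-α) / n) ^ (n - 2) := by
    have := pow_nonneg (hw x hx).le (n - 2)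
    have := rpow_nonneg (ha_pos.trans hx).le (-α - 1)
    positivity
  calc _ = ∫ x in Ioi a,
          |α / n * x ^ (-α - 1) * (1 - x ^ (-α) / n) ^ (n - 2) * (x ^ (-α) - 1)| :=
        setIntegral_congr_fun measurableSet_Ioi fun x (hx : a < x) => by
          rw [hfn, if_pos hx,
            abs_one_sub_mul_paretoMaxDensity hα.le hn (ha_pos.trans hx).le (hw x hx)]
    _ = 2 * paretoMaxPrimitive α n 1 - paretoMaxPrimitive α n a - 0 :=
        integral_Ioi_abs_of_hasDerivAt ha_le
          (fun x hx => hasDerivAt_paretoMaxPrimitive hn (ha_pos.trans_le hx).ne')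
          (fun x hx => mul_nonneg (hfactor x hx.1) (sub_nonneg.2
            (one_le_rpow_of_pos_of_le_one_of_nonpos (ha_pos.trans hx.1) hx.2 (by linarith))))
          (fun x hx => mul_nonpos_of_nonneg_of_nonpos (hfactor x (ha_le.trans_lt hx))
            (sub_nonpos.2 (rpow_le_one_of_one_le_of_nonpos (le_of_lt hx) (by linarith))))
          (tendsto_paretoMaxPrimitive_atTop hα)
    _ = _ := by
      have hpow : (1 - 1 / (n : ℝ)) ^ n = (1 - 1 / n) ^ (n - 1) * (1 - 1 / n) := by
        rw [← pow_succ, Nat.sub_add_cancel (by omega)]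
      rw [paretoMaxPrimitive_one, paretoMaxPrimitive_of_rpow_neg_eq hn
        (rpow_neg_inv_rpow_neg (by positivity) hα.ne'), hpow]
      field_simp [(sub_pos.2 hn1).ne']
      ring
end

section
/- Let W_n be the maximum of n i.i.d. Pareto(α) random variables divided by n^{1/α}, and G Fréchet(α). Then sup_{x ∈ ℝ} |P(W_n ≤ x) − P(G ≤ x)| ≤ 2e^{-1}/(n-1) for all n ≥ 2. -/
/-!
In the variable `t = x ^ (-α)` the two distribution functions become `(1 - t / n) ^ n`
(for `t ≤ n`, and `0` beyond) and `exp (-t)`. For `t ≤ n` their gap is at most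
`t ^ 2 * exp (-t) / n`, and `t ^ 2 * exp (-t) ≤ 4 * exp (-2)`; for `t > n` it is
`exp (-t) ≤ exp (-1) / n`. Both are at most `2 * exp (-1) / n` because `2 * exp (-1) ≤ 1`.
-/

open Real

namespace Real

theorem pow_mul_exp_neg_le {t : ℝ} (ht : 0 ≤ t) (k : ℕ) :
    t ^ k * exp (-t) ≤ k ^ k * exp (-k) := by
  rcases Nat.eq_zero_or_pos k with rfl | hk
  · simpa using ht
  have hk' : (0 : ℝ) < k := by exact_mod_cast hk
  have hbase : t / k ≤ exp (t / k - 1) := by linarith [add_one_le_exp (t / k - 1)]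
  have hpow : (t / k) ^ k ≤ exp (t - k) := by
    calc (t / k) ^ k ≤ exp (t / k - 1) ^ k := by gcongr
      _ = exp (t - k) := by rw [← exp_nat_mul]; field_simp
  calc t ^ k * exp (-t) = k ^ k * (t / k) ^ k * exp (-t) := by
        rw [div_pow, mul_div_cancel₀ _ (pow_ne_zero _ hk'.ne')]
    _ ≤ k ^ k * exp (t - k) * exp (-t) := by gcongr
    _ = k ^ k * exp (-k) := by rw [mul_assoc, ← exp_add]; ring_nf

/-- With `s = t / n` and `A = (1 - s) * exp s`, the gap is `exp (-t) * (1 - A ^ n)`; Bernoulli's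
inequality and `A ≥ (1 - s) * (1 + s)` give `1 - A ^ n ≤ n * s ^ 2`. -/
theorem exp_neg_sub_one_sub_div_pow_le {n : ℕ} (hn : 0 < n) {t : ℝ} (htn : t ≤ n) :
    exp (-t) - (1 - t / n) ^ n ≤ t ^ 2 * exp (-t) / n := by
  have hn' : (0 : ℝ) < n := by exact_mod_cast hn
  set s := t / n with hs
  have hs1 : s ≤ 1 := div_le_one_of_le₀ htn hn'.le
  set A := (1 - s) * exp s with hA
  have hA_lower : 1 - s ^ 2 ≤ A := by
    calc 1 - s ^ 2 = (1 - s) * (s + 1) := by ring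
      _ ≤ A := mul_le_mul_of_nonneg_left (add_one_le_exp s) (by linarith)
  have hA_pow : A ^ n = (1 - s) ^ n * exp t := by
    rw [hA, mul_pow, ← exp_nat_mul, hs, mul_div_cancel₀ _ hn'.ne']
  have hbernoulli : 1 - n * s ^ 2 ≤ A ^ n := by
    have hA_nonneg : 0 ≤ A := mul_nonneg (by linarith) (exp_pos s).le
    have hlinear := mul_le_mul_of_nonneg_left (show -s ^ 2 ≤ A - 1 by linarith) hn'.le
    have hpow := one_add_mul_le_pow (show (-2 : ℝ) ≤ A - 1 by linarith) n
    rw [add_sub_cancel] at hpow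
    linarith
  calc exp (-t) - (1 - s) ^ n = exp (-t) * (1 - A ^ n) := by
        rw [hA_pow, exp_neg]; field_simp
    _ ≤ exp (-t) * (n * s ^ 2) := by gcongr; linarith
    _ = t ^ 2 * exp (-t) / n := by rw [hs]; field_simp

theorem abs_ite_one_sub_div_pow_sub_exp_neg_le {n : ℕ} (hn : 0 < n) {t : ℝ} (ht : 0 ≤ t) :
    |(if t ≤ n then (1 - t / n) ^ n else 0) - exp (-t)| ≤ 2 * exp (-1) / n := by
  have hn' : (0 : ℝ) < n := by exact_mod_cast hn
  have htwo_exp : 2 * exp (-1) ≤ 1 := by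
    rw [exp_neg, ← div_eq_mul_inv, div_le_one (exp_pos 1)]
    linarith [add_one_le_exp 1]
  split_ifs with htn
  · calc |(1 - t / n) ^ n - exp (-t)| = exp (-t) - (1 - t / n) ^ n := by
          rw [abs_sub_comm, abs_of_nonneg (sub_nonneg.2 (one_sub_div_pow_le_exp_neg htn))]
      _ ≤ t ^ 2 * exp (-t) / n := exp_neg_sub_one_sub_div_pow_le hn htn
      _ ≤ 2 ^ 2 * exp (-2) / n := by gcongr ?_ / _; exact_mod_cast pow_mul_exp_neg_le ht 2
      _ = 2 * exp (-1) * (2 * exp (-1)) / n := by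
          rw [show (-2 : ℝ) = -1 + -1 by norm_num, exp_add]; ring
      _ ≤ 2 * exp (-1) / n := by
          gcongr ?_ / _; exact mul_le_of_le_one_right (by positivity) htwo_exp
  · have hnt : n * exp (-t) ≤ exp (-1) := by
      calc n * exp (-t) ≤ t * exp (-t) := by gcongr; linarith
        _ ≤ exp (-1) := by simpa using pow_mul_exp_neg_le ht 1
    rw [zero_sub, abs_neg, abs_of_pos (exp_pos _), le_div_iff₀ hn', mul_comm]
    linarith [exp_pos (-1)]

end Real

theorem pareto_max_kolmogorov_bound (α : ℝ) (hα : 0 < α) (n : ℕ) (hn : 2 ≤ n)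
    (Fn Φ : ℝ → ℝ)
    (hFn : ∀ x : ℝ, Fn x =
      if (n : ℝ) ^ (-(1 / α)) ≤ x then (1 - x ^ (-α) / n) ^ n else 0)
    (hΦ : ∀ x : ℝ, Φ x = if 0 < x then Real.exp (-(x ^ (-α))) else 0) :
    ∀ x : ℝ, |Fn x - Φ x| ≤ 2 * Real.exp (-1) / ((n : ℝ) - 1) := by
  intro x
  have hn' : (1 : ℝ) < n := by exact_mod_cast hn
  have hthreshold : 0 < (n : ℝ) ^ (-(1 / α)) := rpow_pos_of_pos (by linarith) _
  have hdenom : 2 * exp (-1) / n ≤ 2 * exp (-1) / ((n : ℝ) - 1) := by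
    gcongr; linarith
  rw [hFn, hΦ]
  by_cases hx : 0 < x
  · have hcond : (n : ℝ) ^ (-(1 / α)) ≤ x ↔ x ^ (-α) ≤ n := by
      rw [one_div, ← inv_neg]
      exact rpow_inv_le_iff_of_neg (by linarith) hx (neg_neg_of_pos hα)
    simp only [hcond, if_pos hx]
    exact (abs_ite_one_sub_div_pow_sub_exp_neg_le (by omega) (rpow_nonneg hx.le _)).trans hdenom
  · rw [if_neg (by linarith), if_neg hx, sub_zero, abs_zero]
    positivity
end

section
/- For all real x and all n ≥ 2, (1 - x^{-α}/n)^n - e^{-x^{-α}} considered on x ≥ n^{-1/α} satisfies |(1 - x^{-α}/n)^n - e^{-x^{-α}}| ≤ 2e^{-1}/(n-1). -/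
/-!
With `t = x ^ (-α) ∈ [0, n]` and `s = t / n`, compare `(1 - s) ^ n` with `exp (-t) = exp (-s) ^ n`.
The mean value bound for `a ^ n - b ^ n` and `0 ≤ exp (-s) - (1 - s) ≤ s ^ 2 / 2` give the error
`n s² / 2 · exp (-(n - 1) s)`; in terms of `u = (n - 1) s` this is
`n / (2 (n - 1)²) · u² exp (-u) ≤ 2 n exp (-2) / (n - 1)²`, and `n ≤ e (n - 1)` finishes.
-/

open Real

theorem Real.exp_neg_le_one_sub_add_sq_div_two {s : ℝ} (hs : 0 ≤ s) :
    exp (-s) ≤ 1 - s + s ^ 2 / 2 := by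
  have hq : 0 < 1 - s + s ^ 2 / 2 := by nlinarith [sq_nonneg (s - 1)]
  rw [exp_neg, inv_le_comm₀ (exp_pos s) hq]
  refine le_trans ?_ (quadratic_le_exp_of_nonneg hs)
  rw [inv_le_iff_one_le_mul₀ hq]
  -- `(1 + s + s²/2)(1 - s + s²/2) = 1 + s⁴/4`
  nlinarith [pow_nonneg hs 4]

theorem Real.sq_mul_exp_neg_le {u : ℝ} (hu : 0 ≤ u) : u ^ 2 * exp (-u) ≤ 4 * exp (-2) := by
  have hy := mul_exp_neg_le_exp_neg_one (u / 2)
  have hy0 : 0 ≤ u / 2 * exp (-(u / 2)) := by positivity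
  calc u ^ 2 * exp (-u) = 4 * (u / 2 * exp (-(u / 2))) ^ 2 := by
        rw [mul_pow, ← exp_nat_mul]; ring_nf
    _ ≤ 4 * exp (-1) ^ 2 := by gcongr
    _ = 4 * exp (-2) := by rw [← exp_nat_mul]; norm_num

theorem Real.abs_one_sub_div_pow_sub_exp_neg_le {n : ℕ} {t : ℝ} (ht : 0 ≤ t) (htn : t ≤ n) :
    |(1 - t / n) ^ n - exp (-t)| ≤ (t / n) ^ 2 / 2 * n * exp (-(t / n)) ^ (n - 1) := by
  set s := t / n
  have hs : 0 ≤ s := by positivity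
  have hb : 0 ≤ 1 - s := sub_nonneg.2 (div_le_one_of_le₀ htn n.cast_nonneg)
  have hba : 1 - s ≤ exp (-s) := one_sub_le_exp_neg s
  have hexp : exp (-t) = exp (-s) ^ n := by
    rcases n.eq_zero_or_pos with rfl | hn
    · simp [le_antisymm htn (by simpa using ht)]
    · rw [← exp_nat_mul, mul_neg, mul_div_cancel₀ _ (by positivity)]
  calc |(1 - s) ^ n - exp (-t)|
      ≤ |1 - s - exp (-s)| * n * max |1 - s| |exp (-s)| ^ (n - 1) := by
        rw [hexp]; exact abs_pow_sub_pow_le ..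
    _ ≤ s ^ 2 / 2 * n * exp (-s) ^ (n - 1) := by
        rw [abs_of_nonneg hb, abs_of_pos (exp_pos _), max_eq_right hba, abs_sub_comm,
          abs_of_nonneg (sub_nonneg.2 hba)]
        gcongr
        linarith [exp_neg_le_one_sub_add_sq_div_two hs]

theorem Real.abs_one_sub_div_pow_sub_exp_neg_le_two_mul_exp_neg_one_div {n : ℕ} (hn : 2 ≤ n)
    {t : ℝ} (ht : 0 ≤ t) (htn : t ≤ n) :
    |(1 - t / n) ^ n - exp (-t)| ≤ 2 * exp (-1) / ((n : ℝ) - 1) := by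
  have hn2 : (2 : ℝ) ≤ n := by exact_mod_cast hn
  have hn1 : (0 : ℝ) < n - 1 := by linarith
  set u := ((n : ℝ) - 1) * (t / n)
  have hu : 0 ≤ u := by positivity
  have hpow : exp (-(t / n)) ^ (n - 1) = exp (-u) := by
    rw [← exp_nat_mul, Nat.cast_sub (by omega)]; congr 1; simp only [u]; ring
  -- `n ≤ 2 (n - 1) ≤ e (n - 1)`
  have hne : (n : ℝ) * exp (-1) ≤ n - 1 := by
    rw [exp_neg, ← div_eq_mul_inv, div_le_iff₀ (exp_pos 1)]
    nlinarith [add_one_le_exp 1]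
  refine (abs_one_sub_div_pow_sub_exp_neg_le ht htn).trans ?_
  calc (t / n) ^ 2 / 2 * n * exp (-(t / n)) ^ (n - 1)
      = n / (2 * (n - 1) ^ 2) * (u ^ 2 * exp (-u)) := by
        rw [hpow]; simp only [u]; field_simp
    _ ≤ n / (2 * (n - 1) ^ 2) * (4 * exp (-2)) :=
        mul_le_mul_of_nonneg_left (sq_mul_exp_neg_le hu) (by positivity)
    _ ≤ 2 * exp (-1) / (n - 1) := by
        rw [show (-2 : ℝ) = -1 + -1 by norm_num, exp_add, div_mul_eq_mul_div,
          div_le_div_iff₀ (by positivity) hn1]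
        nlinarith [mul_le_mul_of_nonneg_left hne (by positivity : 0 ≤ 4 * exp (-1) * (n - 1))]

theorem Real.rpow_neg_le_of_rpow_neg_inv_le {α c x : ℝ} (hα : 0 < α) (hc : 0 < c)
    (hx : c ^ (-(1 / α)) ≤ x) : x ^ (-α) ≤ c := by
  calc x ^ (-α) ≤ (c ^ (-(1 / α))) ^ (-α) :=
        rpow_le_rpow_of_nonpos (rpow_pos_of_pos hc _) hx (by linarith)
    _ = c := by rw [← rpow_mul hc.le, neg_mul_neg, one_div_mul_cancel hα.ne', rpow_one]

theorem pareto_frechet_pointwise_bound (α : ℝ) (hα : 0 < α) (n : ℕ) (hn : 2 ≤ n) :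
    ∀ x : ℝ, (n : ℝ) ^ (-(1 / α)) ≤ x →
      |(1 - x ^ (-α) / n) ^ n - Real.exp (-(x ^ (-α)))| ≤
        2 * Real.exp (-1) / ((n : ℝ) - 1) := by
  intro x hx
  have hn0 : (0 : ℝ) < n := by positivity
  have hx0 : 0 < x := (rpow_pos_of_pos hn0 _).trans_le hx
  exact abs_one_sub_div_pow_sub_exp_neg_le_two_mul_exp_neg_one_div hn (rpow_nonneg hx0.le _)
    (rpow_neg_le_of_rpow_neg_inv_le hα hn0 hx)
end

section
/- Let G be Fréchet(α) and W a positive random variable with differentiable density f on an interval support, with score ρ = (log f)'. For any bounded differentiable φ with φ(x)x^{α+1} f(x) → 0 at both endpoints of the support (and assuming integrability), E[φ'(W) W^{α+1} + φ(W) W^α (α+1+ W ρ(W))] = 0. -/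
open Real MeasureTheory Filter Set Topology

/-! The integrand is the derivative of `φ(x) x^(α+1) f(x)` on `(a, b)`, because `f' = ρ f` there;
this primitive tends to `0` at both endpoints, so the fundamental theorem of calculus
on the open interval gives zero. -/

theorem integral_Ioo_eq_sub_of_hasDerivAt_of_tendsto {E : Type*} [NormedAddCommGroup E]
    [NormedSpace ℝ E] [CompleteSpace E] {f f' : ℝ → E} {a b : ℝ} {A B : E} (hab : a < b)
    (hderiv : ∀ x ∈ Ioo a b, HasDerivAt f (f' x) x) (hint : IntegrableOn f' (Ioo a b))
    (ha : Tendsto f (𝓝[Ioo a b] a) (𝓝 A)) (hb : Tendsto f (𝓝[Ioo a b] b) (𝓝 B)) :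
    ∫ x in Ioo a b, f' x = B - A := by
  classical
  set F := Function.update (Function.update f a A) b B
  have hF : EqOn F f (Ioo a b) := fun x hx => by
    simp [F, Function.update_of_ne hx.1.ne', Function.update_of_ne hx.2.ne]
  have hFa : F a = A := by simp [F, hab.ne]
  have hFb : F b = B := by simp [F]
  have hFderiv : ∀ x ∈ Ioo a b, HasDerivAt F (f' x) x := fun x hx =>
    (hderiv x hx).congr_of_eventuallyEq (hF.eventuallyEq_of_mem (isOpen_Ioo.mem_nhds hx))
  have hcont : ContinuousOn F (Icc a b) := by
    intro x hx
    rcases hx.1.eq_or_lt with rfl | hax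
    · rw [show F = Function.update (Function.update f b B) a A from
          Function.update_comm hab.ne _ _ _, continuousWithinAt_update_same, Icc_sdiff_left,
        nhdsWithin_Ioc_eq_nhdsGT hab, ← nhdsWithin_Ioo_eq_nhdsGT hab]
      refine ha.congr' (eventually_nhdsWithin_of_forall fun y hy => ?_)
      simp [Function.update_of_ne hy.2.ne]
    rcases hx.2.eq_or_lt with rfl | hxb
    · rw [continuousWithinAt_update_same, Icc_sdiff_right, nhdsWithin_Ico_eq_nhdsLT hab,
        ← nhdsWithin_Ioo_eq_nhdsLT hab]
      refine hb.congr' (eventually_nhdsWithin_of_forall fun y hy => ?_)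
      simp [Function.update_of_ne hy.1.ne']
    · exact (hFderiv x ⟨hax, hxb⟩).continuousAt.continuousWithinAt
  have hFTC := intervalIntegral.integral_eq_sub_of_hasDeriv_right_of_le hab.le hcont
    (fun x hx => (hFderiv x hx).hasDerivWithinAt)
    ((intervalIntegrable_iff_integrableOn_Ioo_of_le hab.le).2 hint)
  rwa [intervalIntegral.integral_of_le hab.le, integral_Ioc_eq_integral_Ioo, hFa, hFb] at hFTC

theorem hasDerivAt_mul_rpow_mul_of_score {φ f : ℝ → ℝ} {x α ρ : ℝ} (hx : 0 < x) (hfx : f x ≠ 0)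
    (hφ : DifferentiableAt ℝ φ x) (hf : DifferentiableAt ℝ f x) (hρ : ρ = deriv f x / f x) :
    HasDerivAt (fun y => φ y * y ^ (α + 1) * f y)
      ((deriv φ x * x ^ (α + 1) + φ x * x ^ α * (α + 1 + x * ρ)) * f x) x := by
  have hpow : HasDerivAt (fun y : ℝ => y ^ (α + 1)) ((α + 1) * x ^ α) x := by
    simpa using Real.hasDerivAt_rpow_const (p := α + 1) (Or.inl hx.ne')
  refine ((hφ.hasDerivAt.mul hpow).mul hf.hasDerivAt).congr_deriv ?_
  rw [hρ, Pi.mul_apply, Real.rpow_add_one hx.ne']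
  field_simp
  ring

theorem general_stein_identity_general (α : ℝ)
    (a b : ℝ) (hab : 0 ≤ a) (hab' : a < b)
    (f : ℝ → ℝ)
    (hf_nonneg : ∀ x ∈ Set.Ioo a b, 0 < f x)
    (hf_diff : ∀ x ∈ Set.Ioo a b, DifferentiableAt ℝ f x)
    (ρ : ℝ → ℝ) (hρ : ∀ x ∈ Set.Ioo a b, ρ x = deriv f x / f x)
    (φ : ℝ → ℝ)
    (hφ_diff : ∀ x ∈ Set.Ioo a b, DifferentiableAt ℝ φ x)
    (hlim_a : Tendsto (fun x => φ x * x ^ (α + 1) * f x) (nhdsWithin a (Set.Ioo a b)) (nhds 0))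
    (hlim_b : Tendsto (fun x => φ x * x ^ (α + 1) * f x) (nhdsWithin b (Set.Ioo a b)) (nhds 0))
    (hint : IntegrableOn
      (fun x => (deriv φ x * x ^ (α + 1) + φ x * x ^ α * (α + 1 + x * ρ x)) * f x)
      (Set.Ioo a b)) :
    ∫ x in Set.Ioo a b,
      (deriv φ x * x ^ (α + 1) + φ x * x ^ α * (α + 1 + x * ρ x)) * f x = 0 := by
  have hderiv : ∀ x ∈ Ioo a b, HasDerivAt (fun y => φ y * y ^ (α + 1) * f y)
      ((deriv φ x * x ^ (α + 1) + φ x * x ^ α * (α + 1 + x * ρ x)) * f x) x := fun x hx =>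
    hasDerivAt_mul_rpow_mul_of_score (hab.trans_lt hx.1) (hf_nonneg x hx).ne' (hφ_diff x hx)
      (hf_diff x hx) (hρ x hx)
  simpa using integral_Ioo_eq_sub_of_hasDerivAt_of_tendsto hab' hderiv hint hlim_a hlim_b

theorem general_stein_identity (α : ℝ) (hα : 0 < α)
    (a b : ℝ) (hab : 0 ≤ a) (hab' : a < b)
    (f : ℝ → ℝ)
    (hf_nonneg : ∀ x ∈ Set.Ioo a b, 0 < f x)
    (hf_diff : ∀ x ∈ Set.Ioo a b, DifferentiableAt ℝ f x)
    (hf_density : ∫ x in Set.Ioo a b, f x = 1)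
    (ρ : ℝ → ℝ) (hρ : ∀ x ∈ Set.Ioo a b, ρ x = deriv f x / f x)
    (φ : ℝ → ℝ) (hφ_bdd : ∃ C, ∀ x, |φ x| ≤ C)
    (hφ_diff : ∀ x ∈ Set.Ioo a b, DifferentiableAt ℝ φ x)
    (hlim_a : Tendsto (fun x => φ x * x ^ (α + 1) * f x) (nhdsWithin a (Set.Ioo a b)) (nhds 0))
    (hlim_b : Tendsto (fun x => φ x * x ^ (α + 1) * f x) (nhdsWithin b (Set.Ioo a b)) (nhds 0))
    (hint : IntegrableOn
      (fun x => (deriv φ x * x ^ (α + 1) + φ x * x ^ α * (α + 1 + x * ρ x)) * f x)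
      (Set.Ioo a b))
    (hint' : IntegrableOn (fun x => deriv φ x * x ^ (α + 1) * f x) (Set.Ioo a b)) :
    ∫ x in Set.Ioo a b,
      (deriv φ x * x ^ (α + 1) + φ x * x ^ α * (α + 1 + x * ρ x)) * f x = 0 :=
  general_stein_identity_general α a b hab hab' f hf_nonneg hf_diff ρ hρ φ hφ_diff hlim_a hlim_b
    hint
end

section
/- Under the assumptions of the Fréchet Stein identity: if W has density f with score ρ and G is Fréchet(α), then for any h such that φ_h = T_α^{-1} h lies in the admissible class, E h(W) − E h(G) = α E[ φ_h(W) (1 − W^α((α+1)/α + (W/α) ρ(W))) ]. -/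
/-!
The product `φ(x) x^{α+1} f(x)` has derivative `(T_α φ)(x) f(x) - α φ(x) w(x) f(x)`, where
`w(x) = 1 - x^α ((α+1)/α + (x/α) ρ(x))` collects the terms coming from `(x^{α+1})'` and from
`f' = ρ f`. Its boundary values vanish, so integrating over the support gives
`E[(T_α φ)(W)] = α E[φ(W) w(W)]`, and `T_α φ_h = h - E h(G)` turns the left side into
`E h(W) - E h(G)`.
-/

open Real MeasureTheory Filter Set Topology

theorem setIntegral_Ioo_eq_sub_of_hasDerivAt_of_tendsto {F F' : ℝ → ℝ} {a b la lb : ℝ}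
    (hab : a < b) (hderiv : ∀ x ∈ Ioo a b, HasDerivAt F (F' x) x)
    (hint : IntegrableOn F' (Ioo a b)) (ha : Tendsto F (𝓝[Ioo a b] a) (𝓝 la))
    (hb : Tendsto F (𝓝[Ioo a b] b) (𝓝 lb)) :
    ∫ x in Ioo a b, F' x = lb - la := by
  rw [nhdsWithin_Ioo_eq_nhdsGT hab] at ha
  rw [nhdsWithin_Ioo_eq_nhdsLT hab] at hb
  rw [← integral_Ioc_eq_integral_Ioo, ← intervalIntegral.integral_of_le hab.le]
  exact intervalIntegral.integral_eq_sub_of_hasDerivAt_of_tendsto hab hderiv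
    ((intervalIntegrable_iff_integrableOn_Ioo_of_le hab.le).mpr hint) ha hb

noncomputable def frechetSteinOp (α : ℝ) (φ : ℝ → ℝ) (x : ℝ) : ℝ :=
  deriv φ x * x ^ (α + 1) + α * φ x

theorem hasDerivAt_mul_rpow_mul {α x : ℝ} {φ f ρ : ℝ → ℝ} (hα : α ≠ 0) (hx : 0 < x)
    (hφ : DifferentiableAt ℝ φ x) (hf : DifferentiableAt ℝ f x)
    (hρ : deriv f x = ρ x * f x) :
    HasDerivAt (fun y => φ y * y ^ (α + 1) * f y)
      (frechetSteinOp α φ x * f x -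
        α * (φ x * (1 - x ^ α * ((α + 1) / α + x / α * ρ x)) * f x)) x := by
  have hpow : HasDerivAt (fun y : ℝ => y ^ (α + 1)) ((α + 1) * x ^ α) x := by
    simpa using hasDerivAt_rpow_const (p := α + 1) (Or.inl hx.ne')
  refine ((hφ.hasDerivAt.mul hpow).mul hf.hasDerivAt).congr_deriv ?_
  rw [Pi.mul_apply, hρ, frechetSteinOp, rpow_add hx, rpow_one]
  field_simp
  ring

theorem integral_frechetSteinOp_mul_eq {α a b : ℝ} {φ f ρ : ℝ → ℝ} (hα : α ≠ 0)
    (ha : 0 ≤ a) (hab : a < b)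
    (hφ : ∀ x ∈ Ioo a b, DifferentiableAt ℝ φ x) (hf : ∀ x ∈ Ioo a b, DifferentiableAt ℝ f x)
    (hρ : ∀ x ∈ Ioo a b, deriv f x = ρ x * f x)
    (hlim_a : Tendsto (fun x => φ x * x ^ (α + 1) * f x) (𝓝[Ioo a b] a) (𝓝 0))
    (hlim_b : Tendsto (fun x => φ x * x ^ (α + 1) * f x) (𝓝[Ioo a b] b) (𝓝 0))
    (hint_op : IntegrableOn (fun x => frechetSteinOp α φ x * f x) (Ioo a b))
    (hint_w : IntegrableOn
      (fun x => φ x * (1 - x ^ α * ((α + 1) / α + x / α * ρ x)) * f x) (Ioo a b)) :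
    ∫ x in Ioo a b, frechetSteinOp α φ x * f x =
      α * ∫ x in Ioo a b, φ x * (1 - x ^ α * ((α + 1) / α + x / α * ρ x)) * f x := by
  have hzero := setIntegral_Ioo_eq_sub_of_hasDerivAt_of_tendsto hab
    (fun x hx => hasDerivAt_mul_rpow_mul hα (ha.trans_lt hx.1) (hφ x hx) (hf x hx) (hρ x hx))
    (hint_op.sub (hint_w.const_mul α)) hlim_a hlim_b
  rw [integral_sub hint_op (hint_w.const_mul α), integral_const_mul, sub_self] at hzero
  exact sub_eq_zero.mp hzero

theorem frechet_stein_comparison_general (α : ℝ) (hα : 0 < α)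
    (a b : ℝ) (hab : 0 ≤ a) (hab' : a < b)
    (f : ℝ → ℝ)
    (hf_nonneg : ∀ x ∈ Set.Ioo a b, 0 < f x)
    (hf_diff : ∀ x ∈ Set.Ioo a b, DifferentiableAt ℝ f x)
    (hf_density : ∫ x in Set.Ioo a b, f x = 1)
    (ρ : ℝ → ℝ) (hρ : ∀ x ∈ Set.Ioo a b, ρ x = deriv f x / f x)
    (h : ℝ → ℝ)
    (hint_hW : IntegrableOn (fun x => h x * f x) (Set.Ioo a b))
    (μh : ℝ)
    (φh : ℝ → ℝ)
    (hφh_diff : ∀ x ∈ Set.Ioo a b, DifferentiableAt ℝ φh x)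
    (hstein : ∀ x : ℝ, 0 < x → deriv φh x * x ^ (α + 1) + α * φh x = h x - μh)
    (hlim_a : Tendsto (fun x => φh x * x ^ (α + 1) * f x) (nhdsWithin a (Set.Ioo a b)) (nhds 0))
    (hlim_b : Tendsto (fun x => φh x * x ^ (α + 1) * f x) (nhdsWithin b (Set.Ioo a b)) (nhds 0))
    (hint2 : IntegrableOn
      (fun x => φh x * (1 - x ^ α * ((α + 1) / α + x / α * ρ x)) * f x) (Set.Ioo a b)) :
    (∫ x in Set.Ioo a b, h x * f x) - μh =
      α * ∫ x in Set.Ioo a b,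
        φh x * (1 - x ^ α * ((α + 1) / α + x / α * ρ x)) * f x := by
  have hf_int : IntegrableOn f (Ioo a b) := Integrable.of_integral_ne_zero (by simp [hf_density])
  have hop : EqOn (fun x => frechetSteinOp α φh x * f x) (fun x => h x * f x - μh * f x)
      (Ioo a b) := fun x hx => by
    simp only [frechetSteinOp, hstein x (hab.trans_lt hx.1)]
    ring
  have hlhs : (∫ x in Ioo a b, h x * f x) - μh = ∫ x in Ioo a b, frechetSteinOp α φh x * f x := by
    rw [setIntegral_congr_fun measurableSet_Ioo hop, integral_sub hint_hW (hf_int.const_mul μh),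
      integral_const_mul, hf_density, mul_one]
  rw [hlhs]
  exact integral_frechetSteinOp_mul_eq hα.ne' hab hab' hφh_diff hf_diff
    (fun x hx => by rw [hρ x hx, div_mul_cancel₀ _ (hf_nonneg x hx).ne']) hlim_a hlim_b
    ((hint_hW.sub (hf_int.const_mul μh)).congr_fun hop.symm measurableSet_Ioo) hint2

theorem frechet_stein_comparison (α : ℝ) (hα : 0 < α)
    (a b : ℝ) (hab : 0 ≤ a) (hab' : a < b)
    (f : ℝ → ℝ)
    (hf_nonneg : ∀ x ∈ Set.Ioo a b, 0 < f x)
    (hf_diff : ∀ x ∈ Set.Ioo a b, DifferentiableAt ℝ f x)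
    (hf_density : ∫ x in Set.Ioo a b, f x = 1)
    (ρ : ℝ → ℝ) (hρ : ∀ x ∈ Set.Ioo a b, ρ x = deriv f x / f x)
    (h : ℝ → ℝ)
    (hint_hW : IntegrableOn (fun x => h x * f x) (Set.Ioo a b))
    (hint_hG : IntegrableOn
      (fun x => h x * (α * x ^ (-α - 1) * Real.exp (-(x ^ (-α))))) (Set.Ioi 0))
    (μh : ℝ)
    (hμh : μh = ∫ x in Set.Ioi (0 : ℝ), h x * (α * x ^ (-α - 1) * Real.exp (-(x ^ (-α)))))
    (φh : ℝ → ℝ)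
    (hφh_diff : ∀ x ∈ Set.Ioo a b, DifferentiableAt ℝ φh x)
    (hstein : ∀ x : ℝ, 0 < x → deriv φh x * x ^ (α + 1) + α * φh x = h x - μh)
    (hlim_a : Tendsto (fun x => φh x * x ^ (α + 1) * f x) (nhdsWithin a (Set.Ioo a b)) (nhds 0))
    (hlim_b : Tendsto (fun x => φh x * x ^ (α + 1) * f x) (nhdsWithin b (Set.Ioo a b)) (nhds 0))
    (hint1 : IntegrableOn (fun x => deriv φh x * x ^ (α + 1) * f x) (Set.Ioo a b))
    (hint2 : IntegrableOn
      (fun x => φh x * (1 - x ^ α * ((α + 1) / α + x / α * ρ x)) * f x) (Set.Ioo a b)) :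
    (∫ x in Set.Ioo a b, h x * f x) - μh =
      α * ∫ x in Set.Ioo a b,
        φh x * (1 - x ^ α * ((α + 1) / α + x / α * ρ x)) * f x :=
  frechet_stein_comparison_general α hα a b hab hab' f hf_nonneg hf_diff hf_density ρ hρ h hint_hW
    μh φh hφh_diff hstein hlim_a hlim_b hint2
end
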